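/- If c ∈ ℂ is an eigenvalue of the weak problem (a)–(c) with eigenvector (u,v,p) ∈ H¹₀(0,a)² × L²₀(0,a), (u,v) ≠ 0, and if moreover U ≡ U₀ is constant (so U' ≡ 0), then p satisfies α²∫|p|² + ∫|p'|² = boundary terms determined by v, and if additionally v''(0) = v''(a) = 0 then p ≡ 0 and c satisfies the decoupled problems −αRe⁻¹i∫u f̄ − (αRe)⁻¹i∫u'f̄' + U₀∫u f̄ = c∫u f̄ for all f ∈ H¹₀. -/
import Mathlib


open Complex intervalIntegral

private lemma stmt18_mul_conj (z : ℂ) : z * (starRingEnd ℂ) z = ((‖z‖^2 : ℝ) : ℂ) := by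
  rw [Complex.mul_conj]; norm_cast; rw [Complex.normSq_eq_norm_sq]

private lemma stmt18_aux_zero {a : ℝ} (ha : 0 < a) {f : ℝ → ℝ} (hf : Continuous f)
    (h0 : ∀ x, 0 ≤ f x) (hi : ∫ x in (0:ℝ)..a, f x = 0) :
    ∀ x ∈ Set.Icc (0:ℝ) a, f x = 0 := by
  have hae := (intervalIntegral.integral_eq_zero_iff_of_le_of_nonneg_ae ha.le
    (Filter.Eventually.of_forall fun x => h0 x) (hf.intervalIntegrable 0 a)).mp hi
  have heq : Set.EqOn f 0 (Set.Ioc 0 a) := by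
    apply MeasureTheory.Measure.eqOn_of_ae_eq hae hf.continuousOn continuousOn_const
    rw [interior_Ioc, closure_Ioo ha.ne]
    exact Set.Ioc_subset_Icc_self
  have h2 := heq.closure hf continuous_const
  rw [closure_Ioc ha.ne] at h2
  exact fun x hx => h2 hx

/-- if `c` is an eigenvalue of the weak problem (a)–(c) with eigenvector
`(u,v,p) ∈ H¹₀(0,a)² × L²₀(0,a)`, `(u,v) ≠ 0`, and the basic flow `U ≡ U₀` is constant
(so `U' ≡ 0`), then `p` satisfies
`α²∫|p|² + ∫|p'|² = Re⁻¹(v''(a)p̄(a) − v''(0)p̄(0))`, and if in addition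
`v''(0) = v''(a) = 0` then `p ≡ 0` on `[0,a]` and `c` satisfies the decoupled weak problem
`−αRe⁻¹i∫u f̄ − (αRe)⁻¹i∫u'f̄' + U₀∫u f̄ = c∫u f̄` for all `f ∈ H¹₀`.
(Sobolev functions are modelled by smooth representatives: test functions are `C¹`,
vanishing at the endpoints for `H¹₀`; `p` has zero mean on `(0,a)`.) -/
theorem stmt18 (a α Re : ℝ) (ha : 0 < a) (hα : 0 < α) (hRe : 0 < Re)
    (c : ℂ) (U₀ : ℝ)
    (u v p : ℝ → ℂ) (hu : ContDiff ℝ 2 u) (hv : ContDiff ℝ 2 v) (hp : ContDiff ℝ 2 p)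
    (hu0 : u 0 = 0) (hua : u a = 0) (hv0 : v 0 = 0) (hva : v a = 0)
    (hnz : u ≠ 0 ∨ v ≠ 0)
    (hpmean : (∫ y in (0:ℝ)..a, p y) = 0)
    -- weak equation (a) with U' ≡ 0:
    (hweaka : ∀ f : ℝ → ℂ, ContDiff ℝ 1 f → f 0 = 0 → f a = 0 →
      - (α : ℂ) * (Re : ℂ)⁻¹ * I * (∫ y in (0:ℝ)..a, u y * (starRingEnd ℂ) (f y))
        - ((α : ℂ) * (Re : ℂ))⁻¹ * I *
            (∫ y in (0:ℝ)..a, deriv u y * (starRingEnd ℂ) (deriv f y))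
        + (U₀ : ℂ) * (∫ y in (0:ℝ)..a, u y * (starRingEnd ℂ) (f y))
        + (∫ y in (0:ℝ)..a, p y * (starRingEnd ℂ) (f y))
      = c * ∫ y in (0:ℝ)..a, u y * (starRingEnd ℂ) (f y))
    -- weak equation (b):
    (hweakb : ∀ f : ℝ → ℂ, ContDiff ℝ 1 f → f 0 = 0 → f a = 0 →
      - (α : ℂ) * (Re : ℂ)⁻¹ * I * (∫ y in (0:ℝ)..a, v y * (starRingEnd ℂ) (f y))
        - ((α : ℂ) * (Re : ℂ))⁻¹ * I *
            (∫ y in (0:ℝ)..a, deriv v y * (starRingEnd ℂ) (deriv f y))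
        + (U₀ : ℂ) * (∫ y in (0:ℝ)..a, v y * (starRingEnd ℂ) (f y))
        + (α : ℂ)⁻¹ * I * (∫ y in (0:ℝ)..a, p y * (starRingEnd ℂ) (deriv f y))
      = c * ∫ y in (0:ℝ)..a, v y * (starRingEnd ℂ) (f y))
    -- weak equation (c) with U' ≡ 0:
    (hweakc : ∀ g : ℝ → ℂ, ContDiff ℝ 1 g →
      - (α : ℂ)^2 * (∫ y in (0:ℝ)..a, p y * (starRingEnd ℂ) (g y))
        - (∫ y in (0:ℝ)..a, deriv p y * (starRingEnd ℂ) (deriv g y))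
      = - (Re : ℂ)⁻¹ * deriv (deriv v) a * (starRingEnd ℂ) (g a)
        + (Re : ℂ)⁻¹ * deriv (deriv v) 0 * (starRingEnd ℂ) (g 0)) :
    -- conclusion 1: the energy identity for p with v-determined boundary terms
    (((α : ℂ)^2 * (∫ y in (0:ℝ)..a, (‖p y‖^2 : ℂ))
        + ∫ y in (0:ℝ)..a, (‖deriv p y‖^2 : ℂ))
      = (Re : ℂ)⁻¹ * (deriv (deriv v) a * (starRingEnd ℂ) (p a)
          - deriv (deriv v) 0 * (starRingEnd ℂ) (p 0))) ∧
    -- conclusion 2: if v''(0) = v''(a) = 0 then p ≡ 0 and u solves the decoupled problem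
    (deriv (deriv v) 0 = 0 → deriv (deriv v) a = 0 →
      (∀ y ∈ Set.Icc (0:ℝ) a, p y = 0) ∧
      (∀ f : ℝ → ℂ, ContDiff ℝ 1 f → f 0 = 0 → f a = 0 →
        - (α : ℂ) * (Re : ℂ)⁻¹ * I * (∫ y in (0:ℝ)..a, u y * (starRingEnd ℂ) (f y))
          - ((α : ℂ) * (Re : ℂ))⁻¹ * I *
              (∫ y in (0:ℝ)..a, deriv u y * (starRingEnd ℂ) (deriv f y))
          + (U₀ : ℂ) * (∫ y in (0:ℝ)..a, u y * (starRingEnd ℂ) (f y))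
        = c * ∫ y in (0:ℝ)..a, u y * (starRingEnd ℂ) (f y))) := by
  
  have hp1 : ContDiff ℝ 1 p := hp.of_le (by norm_num)
  have hc := hweakc p hp1
  have e1 : (fun y => p y * (starRingEnd ℂ) (p y)) = fun y => ((‖p y‖^2 : ℝ) : ℂ) :=
    funext fun y => stmt18_mul_conj (p y)
  have e2 : (fun y => deriv p y * (starRingEnd ℂ) (deriv p y))
      = fun y => ((‖deriv p y‖^2 : ℝ) : ℂ) :=
    funext fun y => stmt18_mul_conj (deriv p y)
  simp only [e1, e2] at hc
  have hcon1 : ((α : ℂ)^2 * (∫ y in (0:ℝ)..a, (‖p y‖^2 : ℂ))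
        + ∫ y in (0:ℝ)..a, (‖deriv p y‖^2 : ℂ))
      = (Re : ℂ)⁻¹ * (deriv (deriv v) a * (starRingEnd ℂ) (p a)
          - deriv (deriv v) 0 * (starRingEnd ℂ) (p 0)) := by
    push_cast at hc ⊢
    linear_combination -hc
  refine ⟨hcon1, fun h0 hA => ?_⟩
  rw [h0, hA] at hcon1
  simp only [zero_mul, sub_zero, mul_zero, zero_sub, neg_zero] at hcon1
  -- convert to real
  have hR1 : (∫ y in (0:ℝ)..a, ((‖p y‖:ℂ))^2)
      = (((∫ y in (0:ℝ)..a, ‖p y‖^2) : ℝ) : ℂ) := by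
    rw [← intervalIntegral.integral_ofReal]; push_cast; ring_nf
  have hR2 : (∫ y in (0:ℝ)..a, ((‖deriv p y‖:ℂ))^2)
      = (((∫ y in (0:ℝ)..a, ‖deriv p y‖^2) : ℝ) : ℂ) := by
    rw [← intervalIntegral.integral_ofReal]; push_cast; ring_nf
  push_cast at hcon1
  rw [hR1, hR2] at hcon1
  have hreal : α^2 * (∫ y in (0:ℝ)..a, ‖p y‖^2) + (∫ y in (0:ℝ)..a, ‖deriv p y‖^2) = 0 := by
    have := hcon1
    push_cast at this
    exact_mod_cast this
  have hAint : 0 ≤ ∫ y in (0:ℝ)..a, ‖p y‖^2 :=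
    intervalIntegral.integral_nonneg ha.le (fun y _ => sq_nonneg _)
  have hBint : 0 ≤ ∫ y in (0:ℝ)..a, ‖deriv p y‖^2 :=
    intervalIntegral.integral_nonneg ha.le (fun y _ => sq_nonneg _)
  have hA0 : (∫ y in (0:ℝ)..a, ‖p y‖^2) = 0 := by
    by_contra h
    have hApos : 0 < ∫ y in (0:ℝ)..a, ‖p y‖^2 := lt_of_le_of_ne hAint (Ne.symm h)
    nlinarith [mul_pos (pow_pos hα 2) hApos]
  have hpz : ∀ y ∈ Set.Icc (0:ℝ) a, p y = 0 := by
    intro y hy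
    have := stmt18_aux_zero ha ((hp.continuous.norm).pow 2) (fun x => sq_nonneg _) hA0 y hy
    simpa [pow_eq_zero_iff, norm_eq_zero] using this
  refine ⟨hpz, fun f hf hf0 hfa => ?_⟩
  have haf := hweaka f hf hf0 hfa
  have hz : (∫ y in (0:ℝ)..a, p y * (starRingEnd ℂ) (f y)) = 0 := by
    have : (∫ y in (0:ℝ)..a, p y * (starRingEnd ℂ) (f y))
        = ∫ y in (0:ℝ)..a, (0:ℂ) := by
      apply intervalIntegral.integral_congr
      intro y hy
      rw [Set.uIcc_of_le ha.le] at hy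
      simp [hpz y hy]
    simpa using this
  linear_combination haf - hz
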